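/- Semantic correctness of the expansion: Let M be a structure, v a variable assignment, A a first-order formula, and T a finite nonempty set of terms whose variables are not bound in A, such that every element of the domain of M is the value under v of some term of T. Then A is true in M under v if and only if the quantifier-free expansion A^T is true in M under v. -/

import Mathlib

namespace Herbrand

abbrev FSym := Option (ℕ ⊕ ℕ)

inductive Tm : Type where
  | var : ℕ → Tm
  | fn : FSym → List Tm → Tm

inductive Fm : Type where
  | atom : ℕ → List Tm → Fm
  | neg : Fm → Fm
  | or : Fm → Fm → Fm
  | and : Fm → Fm → Fm
  | all : ℕ → Fm → Fm
  | ex : ℕ → Fm → Fm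

mutual
  def Tm.beq : Tm → Tm → Bool
    | .var x, .var y => x == y
    | .fn f ts, .fn g us => f == g && Tm.beqList ts us
    | _, _ => false
  def Tm.beqList : List Tm → List Tm → Bool
    | [], [] => true
    | t :: ts, u :: us => Tm.beq t u && Tm.beqList ts us
    | _, _ => false
end

def Tm.height : Tm → ℕ
  | .var _ => 1
  | .fn _ ts => 1 + ts.attach.foldr (fun ⟨t, _⟩ m => max (Tm.height t) m) 0

def Tm.varsT : Tm → List ℕ
  | .var x => [x]
  | .fn _ ts => ts.attach.foldr (fun ⟨t, _⟩ l => Tm.varsT t ++ l) []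

def Tm.symsT : Tm → List (FSym × ℕ)
  | .var _ => []
  | .fn f ts => (f, ts.length) :: ts.attach.foldr (fun ⟨t, _⟩ l => Tm.symsT t ++ l) []

def Tm.substT (x : ℕ) (u : Tm) : Tm → Tm
  | .var y => if y = x then u else .var y
  | .fn f ts => .fn f (ts.attach.map fun ⟨t, _⟩ => Tm.substT x u t)

/-- A term is over the base language: no Skolem symbols, no bullet. -/
def Tm.isBaseT (t : Tm) : Prop := ∀ p ∈ t.symsT, ∃ k : ℕ, p.1 = some (Sum.inl k)

def Fm.freeVars : Fm → List ℕ
  | .atom _ ts => ts.flatMap Tm.varsT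
  | .neg A => A.freeVars
  | .or A B => A.freeVars ++ B.freeVars
  | .and A B => A.freeVars ++ B.freeVars
  | .all x A => A.freeVars.filter (· ≠ x)
  | .ex x A => A.freeVars.filter (· ≠ x)

def Fm.boundVars : Fm → List ℕ
  | .atom _ _ => []
  | .neg A => A.boundVars
  | .or A B => A.boundVars ++ B.boundVars
  | .and A B => A.boundVars ++ B.boundVars
  | .all x A => x :: A.boundVars
  | .ex x A => x :: A.boundVars

def Fm.symsF : Fm → List (FSym × ℕ)
  | .atom _ ts => ts.flatMap Tm.symsT
  | .neg A => A.symsF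
  | .or A B => A.symsF ++ B.symsF
  | .and A B => A.symsF ++ B.symsF
  | .all _ A => A.symsF
  | .ex _ A => A.symsF

/-- Naive substitution of the term `u` for the free occurrences of the variable `x`. -/
def Fm.subst (x : ℕ) (u : Tm) : Fm → Fm
  | .atom p ts => .atom p (ts.map (Tm.substT x u))
  | .neg A => .neg (Fm.subst x u A)
  | .or A B => .or (Fm.subst x u A) (Fm.subst x u B)
  | .and A B => .and (Fm.subst x u A) (Fm.subst x u B)
  | .all y A => if y = x then .all y A else .all y (Fm.subst x u A)
  | .ex y A => if y = x then .ex y A else .ex y (Fm.subst x u A)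

/-- Quantifier-freeness. -/
def Fm.qf : Fm → Prop
  | .atom _ _ => True
  | .neg A => A.qf
  | .or A B => A.qf ∧ B.qf
  | .and A B => A.qf ∧ B.qf
  | .all _ _ => False
  | .ex _ _ => False

def Fm.qfB : Fm → Bool
  | .atom _ _ => true
  | .neg A => A.qfB
  | .or A B => A.qfB && B.qfB
  | .and A B => A.qfB && B.qfB
  | .all _ _ => false
  | .ex _ _ => false

/-- A formula is over the base language. -/
def Fm.isBase (A : Fm) : Prop := ∀ p ∈ A.symsF, ∃ k : ℕ, p.1 = some (Sum.inl k)

/-- Rectified: distinct binders, and bound variables distinct from free variables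
(the tacit assumption of the paper: every occurrence of every variable is either
free or bound by a unique quantifier). -/
def Fm.rectified (A : Fm) : Prop :=
  A.boundVars.Nodup ∧ ∀ x ∈ A.boundVars, x ∉ A.freeVars

/-- Sentential (Boolean) evaluation, reading each atomic formula (a predicate symbol
together with its argument terms) as a propositional variable. -/
def Fm.sentEval (β : ℕ → List Tm → Bool) : Fm → Bool
  | .atom p ts => β p ts
  | .neg A => !(A.sentEval β)
  | .or A B => A.sentEval β || B.sentEval β
  | .and A B => A.sentEval β && B.sentEval β
  | .all _ _ => false
  | .ex _ _ => false

/-- A sentential tautology: a quantifier-free formula that evaluates to true under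
every Boolean valuation of its atoms. -/
def Fm.taut (A : Fm) : Prop := A.qf ∧ ∀ β : ℕ → List Tm → Bool, A.sentEval β = true

/-- An interpretation of the language on a domain `D`. -/
structure Interp (D : Type) where
  fns : FSym → List D → D
  prd : ℕ → List D → Prop

def Tm.eval {D : Type} (I : Interp D) (v : ℕ → D) : Tm → D
  | .var x => v x
  | .fn f ts => I.fns f (ts.attach.map fun ⟨t, _⟩ => Tm.eval I v t)

def Fm.holds {D : Type} (I : Interp D) (v : ℕ → D) : Fm → Prop
  | .atom p ts => I.prd p (ts.map (Tm.eval I v))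
  | .neg A => ¬ Fm.holds I v A
  | .or A B => Fm.holds I v A ∨ Fm.holds I v B
  | .and A B => Fm.holds I v A ∧ Fm.holds I v B
  | .all x A => ∀ d : D, Fm.holds I (Function.update v x d) A
  | .ex x A => ∃ d : D, Fm.holds I (Function.update v x d) A

/-- Validity: truth in every structure (nonempty domain) under every assignment. -/
def Fm.valid (A : Fm) : Prop :=
  ∀ (D : Type) (_ : Nonempty D) (I : Interp D) (v : ℕ → D), A.holds I v


/-- Alpha-equivalence: equality of formulas up to renaming of bound variables. -/
inductive Alpha : Fm → Fm → Prop where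
  | refl (A : Fm) : Alpha A A
  | symm {A B : Fm} : Alpha A B → Alpha B A
  | trans {A B C : Fm} : Alpha A B → Alpha B C → Alpha A C
  | negc {A B : Fm} : Alpha A B → Alpha (.neg A) (.neg B)
  | orc {A A' B B' : Fm} : Alpha A A' → Alpha B B' → Alpha (.or A B) (.or A' B')
  | andc {A A' B B' : Fm} : Alpha A A' → Alpha B B' → Alpha (.and A B) (.and A' B')
  | allc {A B : Fm} (x : ℕ) : Alpha A B → Alpha (.all x A) (.all x B)
  | exc {A B : Fm} (x : ℕ) : Alpha A B → Alpha (.ex x A) (.ex x B)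
  | allRename (x y : ℕ) (A : Fm) : y ∉ A.freeVars → y ∉ A.boundVars →
      Alpha (.all x A) (.all y (Fm.subst x (.var y) A))
  | exRename (x y : ℕ) (A : Fm) : y ∉ A.freeVars → y ∉ A.boundVars →
      Alpha (.ex x A) (.ex y (Fm.subst x (.var y) A))

/-- One-hole contexts `A[…]` in formulas. -/
inductive Ctx : Type where
  | hole : Ctx
  | negC : Ctx → Ctx
  | orL : Ctx → Fm → Ctx
  | orR : Fm → Ctx → Ctx
  | andL : Ctx → Fm → Ctx
  | andR : Fm → Ctx → Ctx
  | allC : ℕ → Ctx → Ctx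
  | exC : ℕ → Ctx → Ctx

def Ctx.fill : Ctx → Fm → Fm
  | .hole, H => H
  | .negC c, H => .neg (c.fill H)
  | .orL c B, H => .or (c.fill H) B
  | .orR B c, H => .or B (c.fill H)
  | .andL c B, H => .and (c.fill H) B
  | .andR B c, H => .and B (c.fill H)
  | .allC x c, H => .all x (c.fill H)
  | .exC x c, H => .ex x (c.fill H)

/-- `true` iff the hole is in the scope of an even number of negation symbols. -/
def Ctx.pol : Ctx → Bool
  | .hole => true
  | .negC c => !c.pol
  | .orL c _ => c.pol
  | .orR _ c => c.pol
  | .andL c _ => c.pol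
  | .andR _ c => c.pol
  | .allC _ c => c.pol
  | .exC _ c => c.pol

/-- The hole is accessible: not in the scope of any quantifier. -/
def Ctx.accessible : Ctx → Prop
  | .hole => True
  | .negC c => c.accessible
  | .orL c _ => c.accessible
  | .orR _ c => c.accessible
  | .andL c _ => c.accessible
  | .andR _ c => c.accessible
  | .allC _ _ => False
  | .exC _ _ => False

/-- Variables occurring free in the context (the hole contributing nothing). -/
def Ctx.freeVarsC : Ctx → List ℕ
  | .hole => []
  | .negC c => c.freeVarsC
  | .orL c B => c.freeVarsC ++ B.freeVars
  | .orR B c => B.freeVars ++ c.freeVarsC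
  | .andL c B => c.freeVarsC ++ B.freeVars
  | .andR B c => B.freeVars ++ c.freeVarsC
  | .allC x c => c.freeVarsC.filter (· ≠ x)
  | .exC x c => c.freeVarsC.filter (· ≠ x)

/-- `mkQ q x H` is `∃x.H` if `q = true`, and `∀x.H` if `q = false`.
A quantifier `mkQ q x` sitting in a context `c` is existentialoid iff `q = c.pol`
(i.e. `∃` under an even number of negations or `∀` under an odd number),
and universaloid iff `q = !c.pol`. -/
def mkQ (q : Bool) (x : ℕ) (H : Fm) : Fm := if q then .ex x H else .all x H

/-- Derivations in the modern version of Herbrand's modus-ponens-free calculus,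
from a start formula, recording the list of instance terms `t` used by the
applications of the generalized rule of γ-quantification. -/
inductive Deriv : Fm → Fm → List Tm → Prop where
  | refl (A : Fm) : Deriv A A []
  | gamma {B : Fm} {ts : List Tm} (c : Ctx) (q : Bool) (x : ℕ) (t : Tm) (H : Fm) :
      Deriv B (c.fill (Fm.subst x t H)) ts →
      c.accessible → q = c.pol → (∀ z ∈ t.varsT, z ∉ H.boundVars) →
      Deriv B (c.fill (mkQ q x H)) (ts ++ [t])
  | delta {B : Fm} {ts : List Tm} (c : Ctx) (q : Bool) (y : ℕ) (H : Fm) :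
      Deriv B (c.fill H) ts →
      c.accessible → q = !c.pol → y ∉ c.freeVarsC →
      Deriv B (c.fill (mkQ q y H)) ts
  | simp {B : Fm} {ts : List Tm} (c : Ctx) (H H' : Fm) :
      Deriv B (c.fill (if c.pol then Fm.or H H' else Fm.and H H')) ts →
      Alpha H H' →
      Deriv B (c.fill H) ts
  | alpha {B A A' : Fm} {ts : List Tm} : Deriv B A ts → Alpha A A' → Deriv B A' ts

/-- A single application of a generalized rule of γ- or δ-quantification. -/
inductive QStep : Fm → Fm → Prop where
  | gamma (c : Ctx) (q : Bool) (x : ℕ) (t : Tm) (H : Fm) :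
      c.accessible → q = c.pol → (∀ z ∈ t.varsT, z ∉ H.boundVars) →
      QStep (c.fill (Fm.subst x t H)) (c.fill (mkQ q x H))
  | delta (c : Ctx) (q : Bool) (y : ℕ) (H : Fm) :
      c.accessible → q = !c.pol → y ∉ c.freeVarsC →
      QStep (c.fill H) (c.fill (mkQ q y H))

/-- A single application of the generalized rule of γ-simplification:
simplification where `H` is of the form `Qy.C` with `Qy.` existentialoid. -/
inductive GSimpStep : Fm → Fm → Prop where
  | mk (c : Ctx) (y : ℕ) (C H' : Fm) :
      Alpha (mkQ c.pol y C) H' →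
      GSimpStep
        (c.fill (if c.pol then Fm.or (mkQ c.pol y C) H' else Fm.and (mkQ c.pol y C) H'))
        (c.fill (mkQ c.pol y C))


/-- The Skolem term `x*(y₁,…,yₘ)` for the removed universaloid variable `x`,
whose arguments are the variables of the existentialoid quantifiers in scope. -/
def skTm (x : ℕ) (γs : List ℕ) : Tm := .fn (some (Sum.inr x)) (γs.map Tm.var)

/-- Outer Skolemization: `b` is the polarity (`true` = an even number of negations
so far), `γs` the list of variables of the existentialoid quantifiers in whose
scope we are, in order. Universaloid quantifiers are removed and their variables
replaced by Skolem terms; existentialoid quantifiers are kept. -/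
def Fm.skolemize (b : Bool) (γs : List ℕ) : Fm → Fm
  | .atom p ts => .atom p ts
  | .neg A => .neg (A.skolemize (!b) γs)
  | .or A B => .or (A.skolemize b γs) (B.skolemize b γs)
  | .and A B => .and (A.skolemize b γs) (B.skolemize b γs)
  | .all x A => if b then Fm.subst x (skTm x γs) (A.skolemize b γs)
                else .all x (A.skolemize b (γs ++ [x]))
  | .ex x A => if b then .ex x (A.skolemize b (γs ++ [x]))
               else Fm.subst x (skTm x γs) (A.skolemize b γs)

/-- The outer Skolemized form of a formula. -/
def Fm.outerSk (A : Fm) : Fm := A.skolemize true []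

def falsum : Fm := .and (.atom 0 []) (.neg (.atom 0 []))
def verum : Fm := .or (.atom 0 []) (.neg (.atom 0 []))

def bigOr : List Fm → Fm
  | [] => falsum
  | [A] => A
  | A :: B :: rest => .or A (bigOr (B :: rest))

def bigAnd : List Fm → Fm
  | [] => verum
  | [A] => A
  | A :: B :: rest => .and A (bigAnd (B :: rest))

/-- All lists of length `k` over the given list. -/
def tuples : ℕ → List Tm → List (List Tm)
  | 0, _ => [[]]
  | k + 1, l => l.flatMap fun a => (tuples k l).map (a :: ·)

/-- The fresh constant `•` is included iff `F` contains neither constants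
nor free variables. -/
def Fm.allowBullet (F : Fm) : Bool :=
  F.freeVars.isEmpty && F.symsF.all (fun p => p.2 != 0)

/-- The champ fini `T_n(F)`: all terms of height `< n` built from the function
symbols (with their arities), constant symbols, and free variables of `F`
(with the fresh constant `•` added if `F` has neither constants nor free
variables).  `T_1(F) = ∅`. -/
def Fm.champTm (F : Fm) : ℕ → List Tm
  | 0 => []
  | 1 => []
  | n + 2 =>
      F.freeVars.map Tm.var
        ++ (if F.allowBullet then [Tm.fn none []] else [])
        ++ F.symsF.flatMap (fun p => (tuples p.2 (F.champTm (n + 1))).map (Tm.fn p.1))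

/-- The expansion `A^T` of `A` w.r.t. a finite set (list) of terms `T`. -/
def Fm.expandL (T : List Tm) : Fm → Fm
  | .atom p ts => .atom p ts
  | .neg A => .neg (A.expandL T)
  | .or A B => .or (A.expandL T) (B.expandL T)
  | .and A B => .and (A.expandL T) (B.expandL T)
  | .ex x A => bigOr (T.map fun t => Fm.subst x t (A.expandL T))
  | .all x A => bigAnd (T.map fun t => Fm.subst x t (A.expandL T))

/-- Property C of order `n` (for `n ≥ 1`): letting `F` be the outer Skolemized
form of `A`, for `n = 1` the formula `F` itself must be a sentential tautology,
and for `n > 1` the expansion `F^{T_n(F)}` must be a sentential tautology. -/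
def Fm.hasC (A : Fm) (n : ℕ) : Prop :=
  (if n = 1 then A.outerSk else Fm.expandL (A.outerSk.champTm n) A.outerSk).taut


/-- Reading every term that starts with a Skolem function symbol as an atomic
variable, via an injective coding `code` of terms into variable names. -/
def Tm.readSk (code : Tm → ℕ) : Tm → Tm
  | .var x => .var x
  | .fn (some (Sum.inr k)) ts => .var (code (.fn (some (Sum.inr k)) ts))
  | .fn (some (Sum.inl k)) ts => .fn (some (Sum.inl k)) (ts.attach.map fun ⟨t, _⟩ => Tm.readSk code t)
  | .fn none ts => .fn none (ts.attach.map fun ⟨t, _⟩ => Tm.readSk code t)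

def Fm.readSk (code : Tm → ℕ) : Fm → Fm
  | .atom p ts => .atom p (ts.map (Tm.readSk code))
  | .neg A => .neg (A.readSk code)
  | .or A B => .or (A.readSk code) (B.readSk code)
  | .and A B => .and (A.readSk code) (B.readSk code)
  | .all x A => .all x (A.readSk code)
  | .ex x A => .ex x (A.readSk code)

/-- The atoms (predicate symbol with argument terms) occurring in a formula. -/
def Fm.atoms : Fm → List (ℕ × List Tm)
  | .atom p ts => [(p, ts)]
  | .neg A => A.atoms
  | .or A B => A.atoms ++ B.atoms
  | .and A B => A.atoms ++ B.atoms
  | .all _ A => A.atoms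
  | .ex _ A => A.atoms

/-- All Boolean valuations of a finite list of atoms (all other atoms `false`). -/
def valuations : List (ℕ × List Tm) → List (ℕ → List Tm → Bool)
  | [] => [fun _ _ => false]
  | a :: rest =>
      (valuations rest).flatMap fun β =>
        [fun p ts => if p == a.1 && Tm.beqList ts a.2 then true else β p ts,
         fun p ts => if p == a.1 && Tm.beqList ts a.2 then false else β p ts]

/-- Computable check for sentential tautology. -/
def Fm.tautB (A : Fm) : Bool :=
  A.qfB && (valuations A.atoms).all fun β => A.sentEval β

/-- Computable check for Property C of order `n`. -/
def Fm.hasCB (A : Fm) (n : ℕ) : Bool :=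
  (if n = 1 then A.outerSk else Fm.expandL (A.outerSk.champTm n) A.outerSk).tautB

/-- The six rules of passage, read from left to right. -/
inductive PassEq : Fm → Fm → Prop where
  | p1 (x : ℕ) (A : Fm) : PassEq (.neg (.all x A)) (.ex x (.neg A))
  | p2 (x : ℕ) (A : Fm) : PassEq (.neg (.ex x A)) (.all x (.neg A))
  | p3 (x : ℕ) (A B : Fm) : x ∉ B.freeVars → PassEq (.or (.all x A) B) (.all x (.or A B))
  | p4 (x : ℕ) (A B : Fm) : x ∉ B.freeVars → PassEq (.or B (.all x A)) (.all x (.or B A))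
  | p5 (x : ℕ) (A B : Fm) : x ∉ B.freeVars → PassEq (.or (.ex x A) B) (.ex x (.or A B))
  | p6 (x : ℕ) (A B : Fm) : x ∉ B.freeVars → PassEq (.or B (.ex x A)) (.ex x (.or B A))

/-- A single inference step of Herbrand's historic modus-ponens-free calculus:
the shallow rules of γ- and δ-quantification (empty context), the generalized
(deep) rule of simplification, the twelve (deep) rules of passage, and renaming
of bound variables. -/
inductive HStep : Fm → Fm → Prop where
  | gammaSh (x : ℕ) (t : Tm) (H : Fm) :
      (∀ z ∈ t.varsT, z ∉ H.boundVars) →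
      HStep (Fm.subst x t H) (.ex x H)
  | deltaSh (y : ℕ) (H : Fm) :
      HStep H (.all y H)
  | simp (c : Ctx) (H H' : Fm) :
      Alpha H H' →
      HStep (c.fill (if c.pol then Fm.or H H' else Fm.and H H')) (c.fill H)
  | passage (c : Ctx) (L R : Fm) : PassEq L R → HStep (c.fill L) (c.fill R)
  | passageRev (c : Ctx) (L R : Fm) : PassEq L R → HStep (c.fill R) (c.fill L)
  | alpha (A B : Fm) : Alpha A B → HStep A B

/-
Induction on `A`, generalizing the assignment. At a quantifier `∃x.B` the covering
hypothesis lets `d` range over the values `⟦t⟧ᵥ`, `t ∈ T`, instead of the whole domain;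
since `x` occurs in no term of `T`, the terms of `T` still cover the domain under
`v[x ↦ d]`, so the induction hypothesis applies to `B` there, and the substitution lemma
for the quantifier-free `B^T` identifies `B^T` under `v[x ↦ ⟦t⟧ᵥ]` with `(B^T){x ↦ t}`
under `v`. The case `∀x.B` is dual.
-/

section Semantics

variable {D : Type} (I : Interp D)

theorem Tm.induction {P : Tm → Prop} (var : ∀ x, P (.var x))
    (fn : ∀ f ts, (∀ t ∈ ts, P t) → P (.fn f ts)) : ∀ t, P t
  | .var x => var x
  | .fn f ts => fn f ts fun t _ => Tm.induction var fn t

@[simp] theorem Tm.varsT_fn (f : FSym) (ts : List Tm) :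
    Tm.varsT (.fn f ts) = ts.flatMap Tm.varsT := by
  simp [Tm.varsT, List.flatMap_def]

@[simp] theorem Tm.substT_fn (x : ℕ) (u : Tm) (f : FSym) (ts : List Tm) :
    Tm.substT x u (.fn f ts) = .fn f (ts.map (Tm.substT x u)) := by
  simp [Tm.substT]

@[simp] theorem Tm.eval_var (v : ℕ → D) (x : ℕ) : Tm.eval I v (.var x) = v x := by
  simp [Tm.eval]

@[simp] theorem Tm.eval_fn (v : ℕ → D) (f : FSym) (ts : List Tm) :
    Tm.eval I v (.fn f ts) = I.fns f (ts.map (Tm.eval I v)) := by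
  simp [Tm.eval]

theorem Tm.eval_update_of_notMem {x : ℕ} {t : Tm} (hx : x ∉ t.varsT) (v : ℕ → D) (d : D) :
    t.eval I (Function.update v x d) = t.eval I v := by
  induction t using Tm.induction with
  | var y =>
    have hxy : y ≠ x := by simpa [Tm.varsT, eq_comm] using hx
    simp [Function.update_of_ne hxy]
  | fn f ts ih =>
    simp only [Tm.varsT_fn, List.mem_flatMap, not_exists, not_and] at hx
    simp only [Tm.eval_fn]
    congr 1
    exact List.map_congr_left fun t ht => ih t ht (hx t ht)

theorem Tm.eval_substT (v : ℕ → D) (x : ℕ) (u t : Tm) :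
    (Tm.substT x u t).eval I v = t.eval I (Function.update v x (u.eval I v)) := by
  induction t using Tm.induction with
  | var y => by_cases h : y = x <;> simp [Tm.substT, h]
  | fn f ts ih =>
    simp only [Tm.substT_fn, Tm.eval_fn, List.map_map]
    congr 1
    exact List.map_congr_left ih

theorem Fm.qf_subst (x : ℕ) (u : Tm) : ∀ A : Fm, A.qf → (Fm.subst x u A).qf
  | .atom _ _, _ => trivial
  | .neg A, h => A.qf_subst x u h
  | .or A B, h => ⟨A.qf_subst x u h.1, B.qf_subst x u h.2⟩
  | .and A B, h => ⟨A.qf_subst x u h.1, B.qf_subst x u h.2⟩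

theorem Fm.holds_subst_of_qf (v : ℕ → D) (x : ℕ) (u : Tm) :
    ∀ A : Fm, A.qf →
      ((Fm.subst x u A).holds I v ↔ A.holds I (Function.update v x (u.eval I v)))
  | .atom p ts, _ => by simp [Fm.subst, Fm.holds, Function.comp_def, Tm.eval_substT]
  | .neg A, h => not_congr (A.holds_subst_of_qf v x u h)
  | .or A B, h => or_congr (A.holds_subst_of_qf v x u h.1) (B.holds_subst_of_qf v x u h.2)
  | .and A B, h => and_congr (A.holds_subst_of_qf v x u h.1) (B.holds_subst_of_qf v x u h.2)

theorem qf_bigOr : ∀ {l : List Fm}, (∀ A ∈ l, A.qf) → (bigOr l).qf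
  | [], _ => ⟨trivial, trivial⟩
  | [A], h => h A (by simp)
  | A :: B :: rest, h => ⟨h A (by simp), qf_bigOr fun C hC => h C (by simp_all)⟩

theorem qf_bigAnd : ∀ {l : List Fm}, (∀ A ∈ l, A.qf) → (bigAnd l).qf
  | [], _ => ⟨trivial, trivial⟩
  | [A], h => h A (by simp)
  | A :: B :: rest, h => ⟨h A (by simp), qf_bigAnd fun C hC => h C (by simp_all)⟩

theorem holds_bigOr (v : ℕ → D) : ∀ l : List Fm, (bigOr l).holds I v ↔ ∃ A ∈ l, A.holds I v
  | [] => by simp [bigOr, falsum, Fm.holds]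
  | [A] => by simp [bigOr]
  | A :: B :: rest => by simp [bigOr, Fm.holds, holds_bigOr v (B :: rest)]

theorem holds_bigAnd (v : ℕ → D) : ∀ l : List Fm, (bigAnd l).holds I v ↔ ∀ A ∈ l, A.holds I v
  | [] => by simp [bigAnd, verum, Fm.holds, em]
  | [A] => by simp [bigAnd]
  | A :: B :: rest => by simp [bigAnd, Fm.holds, holds_bigAnd v (B :: rest)]

theorem Fm.qf_expandL (T : List Tm) : ∀ A : Fm, (A.expandL T).qf
  | .atom _ _ => trivial
  | .neg A => A.qf_expandL T
  | .or A B => ⟨A.qf_expandL T, B.qf_expandL T⟩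
  | .and A B => ⟨A.qf_expandL T, B.qf_expandL T⟩
  | .ex _ A => qf_bigOr <| by simpa using fun _ _ => (A.expandL T).qf_subst _ _ (A.qf_expandL T)
  | .all _ A => qf_bigAnd <| by simpa using fun _ _ => (A.expandL T).qf_subst _ _ (A.qf_expandL T)

def Covers (v : ℕ → D) (T : List Tm) : Prop := ∀ d : D, ∃ t ∈ T, t.eval I v = d

namespace Covers

variable {I} {v : ℕ → D} {T : List Tm}

theorem exists_iff (hT : Covers I v T) {P : D → Prop} : (∃ d, P d) ↔ ∃ t ∈ T, P (t.eval I v) :=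
  ⟨fun ⟨d, hd⟩ => by obtain ⟨t, ht, rfl⟩ := hT d; exact ⟨t, ht, hd⟩,
    fun ⟨t, _, ht⟩ => ⟨_, ht⟩⟩

theorem forall_iff (hT : Covers I v T) {P : D → Prop} : (∀ d, P d) ↔ ∀ t ∈ T, P (t.eval I v) :=
  ⟨fun h t _ => h _, fun h d => by obtain ⟨t, ht, rfl⟩ := hT d; exact h t ht⟩

theorem update (hT : Covers I v T) {x : ℕ} (hx : ∀ t ∈ T, x ∉ t.varsT) (d : D) :
    Covers I (Function.update v x d) T := fun e => by
  obtain ⟨t, ht, rfl⟩ := hT e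
  exact ⟨t, ht, Tm.eval_update_of_notMem I (hx t ht) v d⟩

end Covers

theorem notMem_boundVars_of_subset {T : List Tm} {A B : Fm} (hAB : A.boundVars ⊆ B.boundVars)
    (hB : ∀ t ∈ T, ∀ z ∈ t.varsT, z ∉ B.boundVars) : ∀ t ∈ T, ∀ z ∈ t.varsT, z ∉ A.boundVars :=
  fun t ht z hz hA => hB t ht z hz (hAB hA)

theorem Fm.holds_update_iff_holds_subst_expandL {T : List Tm} {x : ℕ} (A : Fm) {v : ℕ → D}
    (hx : ∀ t ∈ T, x ∉ t.varsT) (hc : Covers I v T)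
    (hA : ∀ v', Covers I v' T → (A.holds I v' ↔ (A.expandL T).holds I v')) (t : Tm) :
    A.holds I (Function.update v x (t.eval I v)) ↔ (Fm.subst x t (A.expandL T)).holds I v :=
  (hA _ (hc.update hx _)).trans ((A.expandL T).holds_subst_of_qf I v x t (A.qf_expandL T)).symm

theorem Fm.holds_iff_holds_expandL {T : List Tm} :
    ∀ (A : Fm) {v : ℕ → D}, (∀ t ∈ T, ∀ z ∈ t.varsT, z ∉ A.boundVars) → Covers I v T →
      (A.holds I v ↔ (A.expandL T).holds I v)
  | .atom _ _, _, _, _ => Iff.rfl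
  | .neg A, _, hb, hc => not_congr (A.holds_iff_holds_expandL hb hc)
  | .or A B, _, hb, hc =>
    or_congr (A.holds_iff_holds_expandL (notMem_boundVars_of_subset (by simp [Fm.boundVars]) hb) hc)
      (B.holds_iff_holds_expandL (notMem_boundVars_of_subset (by simp [Fm.boundVars]) hb) hc)
  | .and A B, _, hb, hc =>
    and_congr (A.holds_iff_holds_expandL (notMem_boundVars_of_subset (by simp [Fm.boundVars]) hb) hc)
      (B.holds_iff_holds_expandL (notMem_boundVars_of_subset (by simp [Fm.boundVars]) hb) hc)
  | .ex x A, _, hb, hc => by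
    have hx : ∀ t ∈ T, x ∉ t.varsT := fun t ht h => hb t ht x h List.mem_cons_self
    have hA := fun v' => A.holds_iff_holds_expandL (v := v')
      (notMem_boundVars_of_subset (List.subset_cons_self x _) hb)
    simp only [Fm.holds, Fm.expandL, holds_bigOr, List.mem_map, exists_exists_and_eq_and,
      hc.exists_iff]
    exact exists_congr fun t =>
      and_congr_right fun _ => A.holds_update_iff_holds_subst_expandL I hx hc hA t
  | .all x A, _, hb, hc => by
    have hx : ∀ t ∈ T, x ∉ t.varsT := fun t ht h => hb t ht x h List.mem_cons_self
    have hA := fun v' => A.holds_iff_holds_expandL (v := v')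
      (notMem_boundVars_of_subset (List.subset_cons_self x _) hb)
    simp only [Fm.holds, Fm.expandL, holds_bigAnd, List.forall_mem_map, hc.forall_iff]
    exact forall₂_congr fun t _ => A.holds_update_iff_holds_subst_expandL I hx hc hA t

end Semantics

/-- **Semantic correctness of the expansion.** If every element of the domain is
the value under `v` of some term of the finite nonempty list `T`, whose
variables are not bound in `A`, then `A` is true in `M` under `v` iff the
quantifier-free expansion `A^T` is. -/
theorem expansion_semantics {D : Type} (hD : Nonempty D) (I : Interp D)
    (v : ℕ → D) (A : Fm) (T : List Tm) (hne : T ≠ [])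
    (hvars : ∀ t ∈ T, ∀ z ∈ Tm.varsT t, z ∉ A.boundVars)
    (hcover : ∀ d : D, ∃ t ∈ T, Tm.eval I v t = d) :
    A.holds I v ↔ (A.expandL T).holds I v :=
  A.holds_iff_holds_expandL I hvars hcover

end Herbrand
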